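/- arXiv:2302.13014 — 7 statements merged into one kernel-verified Lean document; each statement's English description precedes it below -/
import Mathlib

section
/- Let n ≥ 5 and let W_n be the wheel graph on n vertices. Then T_1(W_n) = 2 and B_1(W_n) = 1; that is, the minimum number of tile types over all pots realizing W_n is 2, and the minimum number of bond-edge types over all pots realizing W_n is 1. -/
/-!
Basic framework for flexible-tile DNA self-assembly.

Bond-edge types are elements of `Fin m`.  A cohesive end is either unhatted
(`Sum.inl a`) or hatted (`Sum.inr a`).  A tile is a finite multiset of cohesive
ends, and a pot is a finite set of tiles.
-/

/-- A tile over the bond-edge alphabet `Fin m`. -/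
abbrev Tile (m : ℕ) : Type := Multiset (Fin m ⊕ Fin m)

/-- A pot: a finite set of tiles over the alphabet `Fin m`. -/
abbrev Pot (m : ℕ) : Type := Finset (Tile m)

/-- A finite multigraph (nonempty finite vertex set, finite edge set; loops and
parallel edges allowed), edges recorded by their unordered pair of endpoints. -/
structure Multigraph where
  V : Type
  E : Type
  [fintypeV : Fintype V]
  [decEqV : DecidableEq V]
  [nonemptyV : Nonempty V]
  [fintypeE : Fintype E]
  ends : E → Sym2 V

attribute [instance] Multigraph.fintypeV Multigraph.decEqV
  Multigraph.nonemptyV Multigraph.fintypeE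

/-- The order (number of vertices) of a multigraph. -/
def Multigraph.order (G : Multigraph) : ℕ := Fintype.card G.V

/-- An assembly of `G` from tiles over `Fin m`: each edge gets an orientation
(an ordered pair of vertices compatible with its endpoints) and a bond-edge type. -/
structure Assembly (m : ℕ) (G : Multigraph) where
  orient : G.E → G.V × G.V
  label : G.E → Fin m
  orient_ends : ∀ e : G.E, G.ends e = s((orient e).1, (orient e).2)

/-- The tile of a vertex `v` under an assembly: one unhatted `a` for each edge
labeled `a` oriented out of `v`, one hatted `a` for each edge labeled `a`
oriented into `v`. -/
def Assembly.tileOf {m : ℕ} {G : Multigraph} (A : Assembly m G) (v : G.V) : Tile m :=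
  (Finset.univ : Finset G.E).val.bind fun e =>
    (if (A.orient e).1 = v then {Sum.inl (A.label e)} else 0) +
    (if (A.orient e).2 = v then {Sum.inr (A.label e)} else 0)

/-- `G` is realized by the pot `P`: there is an assembly of `G` all of whose
vertex tiles belong to `P`. -/
def Realizes {m : ℕ} (P : Pot m) (G : Multigraph) : Prop :=
  ∃ A : Assembly m G, ∀ v : G.V, A.tileOf v ∈ P

/-- `C(P)`: the class of multigraphs realized by `P`. -/
def CSet {m : ℕ} (P : Pot m) : Set Multigraph := {G | Realizes P G}

/-- `m_P`: the minimum order of a multigraph realized by `P`. -/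
noncomputable def mP {m : ℕ} (P : Pot m) : ℕ :=
  sInf {n | ∃ G ∈ CSet P, G.order = n}

/-- `C_min(P)`: the multigraphs realized by `P` of minimum order. -/
def Cmin {m : ℕ} (P : Pot m) : Set Multigraph :=
  {G ∈ CSet P | G.order = mP P}

/-- An isomorphism of multigraphs. -/
structure MultigraphIso (G H : Multigraph) where
  vEquiv : G.V ≃ H.V
  eEquiv : G.E ≃ H.E
  ends_eq : ∀ e : G.E, H.ends (eEquiv e) = (G.ends e).map vEquiv

/-- Two multigraphs are isomorphic. -/
def Isomorphic (G H : Multigraph) : Prop := Nonempty (MultigraphIso G H)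

/-- Scenario 1: minimum number of tile types over all pots realizing `G`. -/
noncomputable def T1 (G : Multigraph) : ℕ :=
  sInf {c | ∃ m : ℕ, ∃ P : Pot m, Realizes P G ∧ P.card = c}

/-- Scenario 1: minimum number of bond-edge types over all pots realizing `G`. -/
noncomputable def B1 (G : Multigraph) : ℕ :=
  sInf {m | ∃ P : Pot m, Realizes P G}

/-- Scenario 2: minimum number of tile types over pots `P` with `G ∈ C(P)` and
`m_P = |V(G)|`. -/
noncomputable def T2 (G : Multigraph) : ℕ :=
  sInf {c | ∃ m : ℕ, ∃ P : Pot m, Realizes P G ∧ mP P = G.order ∧ P.card = c}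

/-- Scenario 2: minimum number of bond-edge types over pots `P` with `G ∈ C(P)`
and `m_P = |V(G)|`. -/
noncomputable def B2 (G : Multigraph) : ℕ :=
  sInf {m | ∃ P : Pot m, Realizes P G ∧ mP P = G.order}

/-- Scenario 3: minimum number of tile types over pots `P` with `C_min(P)`
consisting exactly of the multigraphs isomorphic to `G`. -/
noncomputable def T3 (G : Multigraph) : ℕ :=
  sInf {c | ∃ m : ℕ, ∃ P : Pot m, Cmin P = {H | Isomorphic H G} ∧ P.card = c}

/-- Scenario 3: minimum number of bond-edge types over pots `P` with `C_min(P)`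
consisting exactly of the multigraphs isomorphic to `G`. -/
noncomputable def B3 (G : Multigraph) : ℕ :=
  sInf {m | ∃ P : Pot m, Cmin P = {H | Isomorphic H G}}

/-- The degree of a vertex (a loop contributes 2). -/
def Multigraph.degree (G : Multigraph) (v : G.V) : ℕ :=
  ∑ e : G.E, (if v ∈ G.ends e then (if (G.ends e).IsDiag then 2 else 1) else 0)

/-- `av(G)`: the number of distinct vertex degrees in `G`. -/
def av (G : Multigraph) : ℕ := (Finset.univ.image G.degree).card

/-- `ev(G)`: the number of distinct even vertex degrees in `G`. -/
def ev (G : Multigraph) : ℕ :=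
  ((Finset.univ.image G.degree).filter (fun d => Even d)).card

/-- `ov(G)`: the number of distinct odd vertex degrees in `G`. -/
def ov (G : Multigraph) : ℕ :=
  ((Finset.univ.image G.degree).filter (fun d => Odd d)).card

/-- `z i t`: the net number of cohesive ends of type `i` on tile `t`
(unhatted count minus hatted count). -/
def zval {m : ℕ} (i : Fin m) (t : Tile m) : ℤ :=
  (t.count (Sum.inl i) : ℤ) - (t.count (Sum.inr i) : ℤ)

/-- The wheel graph on `n` vertices: the hub is `none`; the outer-cycle
vertices are `some i` for `i : Fin (n-1)`.  Edge `Sum.inl i` is the spoke from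
the hub to `some i`; edge `Sum.inr i` is the outer-cycle edge from `some i` to
`some ((i+1) mod (n-1))`. -/
def wheel (n : ℕ) : Multigraph where
  V := Option (Fin (n - 1))
  E := Fin (n - 1) ⊕ Fin (n - 1)
  ends e :=
    match e with
    | Sum.inl i => s((none : Option (Fin (n - 1))), some i)
    | Sum.inr i => s(some i,
        some ⟨(i.val + 1) % (n - 1), Nat.mod_lt _ (by have := i.isLt; omega)⟩)

/-- The cycle graph on `n` vertices (vertices `none, some 0, …, some (n-2)`,
edge `k` joining the `k`-th and `(k+1 mod n)`-th vertices in this order). -/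
def cycleVtx (n : ℕ) (k : Fin n) : Option (Fin (n - 1)) :=
  if h : k.val = 0 then none else some ⟨k.val - 1, by have := k.isLt; omega⟩

def cycleGraph (n : ℕ) : Multigraph where
  V := Option (Fin (n - 1))
  E := Fin n
  ends k := s(cycleVtx n k,
    cycleVtx n ⟨(k.val + 1) % n, Nat.mod_lt _ (by have := k.isLt; omega)⟩)

/-!
Orient every spoke away from the hub and the outer cycle cyclically, and give all edges the same
bond-edge type `a`: the hub then carries the tile `aⁿ⁻¹` and every cycle vertex the tile
`{a, â, â}`, so one bond-edge type and two tiles suffice. Conversely, the tile of a vertex has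
exactly as many cohesive ends as the vertex has degree, so the hub (degree `n - 1 ≥ 4`) and a
cycle vertex (degree 3) need different tiles, and labelling any edge needs one bond-edge type.
-/

open Finset

namespace Assembly

variable {m : ℕ} {G : Multigraph}

lemma tileOf_eq (A : Assembly m G) (v : G.V) :
    A.tileOf v =
      (univ.filter fun e => (A.orient e).1 = v).val.map (Sum.inl ∘ A.label) +
      (univ.filter fun e => (A.orient e).2 = v).val.map (Sum.inr ∘ A.label) := by
  rw [tileOf, Multiset.bind_add]
  congr 1 <;> rw [filter_val, ← Multiset.bind_singleton, Multiset.bind_filter] <;> rfl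

lemma card_tileOf (A : Assembly m G) (v : G.V) : Multiset.card (A.tileOf v) = G.degree v := by
  rw [tileOf_eq, Multiset.card_add, Multiset.card_map, Multiset.card_map, ← card_def, ← card_def,
    card_filter, card_filter, ← sum_add_distrib]
  refine sum_congr rfl fun e _ => ?_
  simp only [A.orient_ends e, Sym2.mem_iff, Sym2.mk_isDiag_iff, @eq_comm _ v]
  obtain ⟨a, b⟩ := A.orient e
  split_ifs <;> grind

lemma tileOf_eq_replicate (A : Assembly 1 G) (v : G.V) :
    A.tileOf v =
      Multiset.replicate #{e | (A.orient e).1 = v} (Sum.inl 0) +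
      Multiset.replicate #{e | (A.orient e).2 = v} (Sum.inr 0) := by
  rw [tileOf_eq]
  congr 1 <;> rw [card_def, ← Multiset.map_const'] <;>
    exact Multiset.map_congr rfl fun e _ => by simp [Fin.fin_one_eq_zero (A.label e)]

end Assembly

namespace Realizes

variable {m : ℕ} {P : Pot m} {G : Multigraph}

lemma two_le_card_of_degree_ne (h : Realizes P G) {u v : G.V}
    (huv : G.degree u ≠ G.degree v) :
    2 ≤ P.card := by
  obtain ⟨A, hA⟩ := h
  refine one_lt_card.mpr ⟨_, hA u, _, hA v, fun heq => huv ?_⟩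
  rw [← A.card_tileOf, ← A.card_tileOf, heq]

lemma alphabet_pos (h : Realizes P G) (e : G.E) : 0 < m := by
  obtain ⟨A, -⟩ := h
  exact (A.label e).pos

end Realizes

namespace wheel

variable {n : ℕ}

/- Typing the vertices and edges as `(wheel n).V` and `(wheel n).E` rather than as `Option _` and
`_ ⊕ _` keeps the goals type-correct without unfolding `wheel`, so `rw` and `simp` apply. -/
variable (n) in
def hub : (wheel n).V := none

def rim (i : Fin (n - 1)) : (wheel n).V := some i

def spoke (i : Fin (n - 1)) : (wheel n).E := .inl i

def rimEdge (i : Fin (n - 1)) : (wheel n).E := .inr i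

def succ (i : Fin (n - 1)) : Fin (n - 1) :=
  ⟨(i.val + 1) % (n - 1), Nat.mod_lt _ (by have := i.isLt; omega)⟩

lemma succ_injective : Function.Injective (succ (n := n)) := by
  intro i j h
  have h' : i.val + 1 ≡ j.val + 1 [MOD n - 1] := congrArg Fin.val h
  exact Fin.ext (Nat.ModEq.eq_of_lt_of_lt (Nat.ModEq.add_right_cancel' 1 h') i.isLt j.isLt)

lemma card_filter_succ_eq (j : Fin (n - 1)) : #{i | succ i = j} = 1 := by
  obtain ⟨i, rfl⟩ := Finite.surjective_of_injective succ_injective j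
  simp [succ_injective.eq_iff, filter_eq']

@[simp] lemma rim_inj {i j : Fin (n - 1)} : rim i = rim j ↔ i = j := Option.some_inj

@[simp] lemma hub_ne_rim (i : Fin (n - 1)) : hub n ≠ rim i := (Option.some_ne_none i).symm

@[simp] lemma rim_ne_hub (i : Fin (n - 1)) : rim i ≠ hub n := Option.some_ne_none i

lemma sum_edges {M : Type*} [AddCommMonoid M] (f : (wheel n).E → M) :
    ∑ e, f e = ∑ i, f (spoke i) + ∑ i, f (rimEdge i) :=
  Fintype.sum_sum_type f

variable (n) in
def assembly : Assembly 1 (wheel n) where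
  orient
    | .inl i => (hub n, rim i)
    | .inr i => (rim i, rim (succ i))
  label _ := 0
  orient_ends := by rintro (i | i) <;> rfl

@[simp] lemma assembly_orient_spoke (i : Fin (n - 1)) :
    (assembly n).orient (spoke i) = (hub n, rim i) := rfl

@[simp] lemma assembly_orient_rimEdge (i : Fin (n - 1)) :
    (assembly n).orient (rimEdge i) = (rim i, rim (succ i)) := rfl

lemma assembly_tileOf_hub :
    (assembly n).tileOf (hub n) = Multiset.replicate (n - 1) (Sum.inl 0) := by
  rw [Assembly.tileOf_eq_replicate, card_filter, card_filter, sum_edges, sum_edges]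
  simp

lemma assembly_tileOf_rim (j : Fin (n - 1)) :
    (assembly n).tileOf (rim j) = {Sum.inl 0, Sum.inr 0, Sum.inr 0} := by
  rw [Assembly.tileOf_eq_replicate, card_filter, card_filter, sum_edges, sum_edges]
  simp [card_filter_succ_eq, Multiset.cons_swap]

variable (n) in
def pot : Pot 1 := {Multiset.replicate (n - 1) (Sum.inl 0), {Sum.inl 0, Sum.inr 0, Sum.inr 0}}

lemma realizes_pot : Realizes (pot n) (wheel n) := by
  refine ⟨assembly n, fun v => ?_⟩
  cases v with
  | none =>
    change (assembly n).tileOf (hub n) ∈ pot n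
    simp [assembly_tileOf_hub, pot]
  | some i =>
    change (assembly n).tileOf (rim i) ∈ pot n
    simp [assembly_tileOf_rim, pot]

lemma degree_hub : (wheel n).degree (hub n) = n - 1 := by
  rw [← (assembly n).card_tileOf, assembly_tileOf_hub, Multiset.card_replicate]

lemma degree_rim (i : Fin (n - 1)) : (wheel n).degree (rim i) = 3 := by
  rw [← (assembly n).card_tileOf, assembly_tileOf_rim]
  rfl

end wheel

/-- For `n ≥ 5`, the wheel graph `W_n` satisfies `T₁(W_n) = 2` and `B₁(W_n) = 1`. -/
theorem wheel_scenario1 (n : ℕ) (hn : 5 ≤ n) :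
    T1 (wheel n) = 2 ∧ B1 (wheel n) = 1 := by
  let i₀ : Fin (n - 1) := ⟨0, by omega⟩
  have hdeg : (wheel n).degree (wheel.hub n) ≠ (wheel n).degree (wheel.rim i₀) := by
    rw [wheel.degree_hub, wheel.degree_rim]
    omega
  have hcard : (wheel.pot n).card = 2 :=
    le_antisymm card_le_two (wheel.realizes_pot.two_le_card_of_degree_ne hdeg)
  constructor
  · exact IsLeast.csInf_eq ⟨⟨1, _, wheel.realizes_pot, hcard⟩,
      fun c ⟨_, _, hP, hc⟩ => hc ▸ hP.two_le_card_of_degree_ne hdeg⟩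
  · exact IsLeast.csInf_eq ⟨⟨_, wheel.realizes_pot⟩,
      fun m ⟨_, hP⟩ => hP.alphabet_pos (wheel.spoke i₀)⟩
end

section
/- Let n ≥ 5 and let P be a pot such that C_min(P) = {W_n} (up to isomorphism). Then in any assembly of W_n from P, no bond-edge type appears both on an edge of the outer cycle and on a spoke edge not incident to that outer-cycle edge. -/
/-!
Two edges carrying the same bond-edge type may exchange their heads without changing any vertex
tile, so the rewired graph is again realized by `P` and has the same order as `W_n`; hence it lies
in `C_min(P)` and must be a wheel, in particular without parallel edges. Exchanging the heads of an
outer-cycle edge and a spoke not incident to it, however, always produces an edge parallel to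
another spoke.
-/

namespace MultigraphIso

def refl (G : Multigraph) : MultigraphIso G G :=
  ⟨Equiv.refl _, Equiv.refl _, fun e => by simp⟩

theorem ends_injective {G H : Multigraph} (ψ : MultigraphIso G H)
    (hH : Function.Injective H.ends) : Function.Injective G.ends := by
  intro x y hxy
  apply ψ.eEquiv.injective
  apply hH
  rw [ψ.ends_eq, ψ.ends_eq, hxy]

end MultigraphIso

theorem mem_Cmin_of_realizes {m : ℕ} {P : Pot m} {G H : Multigraph} (hG : G ∈ Cmin P)
    (hH : Realizes P H) (horder : H.order = G.order) : H ∈ Cmin P :=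
  ⟨hH, horder.trans hG.2⟩

namespace Assembly

variable {m : ℕ} {G : Multigraph}

theorem fst_mem_ends (A : Assembly m G) (e : G.E) : (A.orient e).1 ∈ G.ends e :=
  A.orient_ends e ▸ Sym2.mem_mk_left _ _

theorem snd_mem_ends (A : Assembly m G) (e : G.E) : (A.orient e).2 ∈ G.ends e :=
  A.orient_ends e ▸ Sym2.mem_mk_right _ _

theorem tileOf_eq_sum (A : Assembly m G) (v : G.V) :
    A.tileOf v =
      (∑ e, if (A.orient e).1 = v then ({Sum.inl (A.label e)} : Tile m) else 0) +
        ∑ e, if (A.orient e).2 = v then ({Sum.inr (A.label e)} : Tile m) else 0 := by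
  rw [← Finset.sum_add_distrib]
  rfl

abbrev rewire (A : Assembly m G) (σ : Equiv.Perm G.E) : Multigraph where
  V := G.V
  E := G.E
  ends e := s((A.orient e).1, (A.orient (σ e)).2)

def rewireAssembly (A : Assembly m G) (σ : Equiv.Perm G.E) : Assembly m (A.rewire σ) where
  orient e := ((A.orient e).1, (A.orient (σ e)).2)
  label := A.label
  orient_ends _ := rfl

theorem rewire_ends_of_apply_eq (A : Assembly m G) {σ : Equiv.Perm G.E} {e : G.E}
    (he : σ e = e) : (A.rewire σ).ends e = G.ends e := by
  simp only [rewire, he]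
  exact (A.orient_ends e).symm

theorem rewire_swap_ends_left [DecidableEq G.E] (A : Assembly m G) (e₁ e₂ : G.E) :
    (A.rewire (Equiv.swap e₁ e₂)).ends e₁ = s((A.orient e₁).1, (A.orient e₂).2) := by
  simp only [rewire, Equiv.swap_apply_left]

theorem rewire_swap_ends_right [DecidableEq G.E] (A : Assembly m G) (e₁ e₂ : G.E) :
    (A.rewire (Equiv.swap e₁ e₂)).ends e₂ = s((A.orient e₂).1, (A.orient e₁).2) := by
  simp only [rewire, Equiv.swap_apply_right]

theorem tileOf_rewireAssembly (A : Assembly m G) {σ : Equiv.Perm G.E}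
    (hσ : ∀ e, A.label (σ e) = A.label e) (v : G.V) :
    (A.rewireAssembly σ).tileOf v = A.tileOf v := by
  rw [tileOf_eq_sum (A.rewireAssembly σ) v, tileOf_eq_sum]
  congr 1
  refine Fintype.sum_equiv σ _ _ fun e => ?_
  simp only [rewireAssembly, hσ]
  rfl

theorem realizes_rewire {P : Pot m} (A : Assembly m G) (hA : ∀ v, A.tileOf v ∈ P)
    {σ : Equiv.Perm G.E} (hσ : ∀ e, A.label (σ e) = A.label e) : Realizes P (A.rewire σ) :=
  ⟨A.rewireAssembly σ, fun v => (A.tileOf_rewireAssembly hσ v).symm ▸ hA v⟩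

end Assembly

instance (n : ℕ) : DecidableEq (wheel n).E :=
  inferInstanceAs (DecidableEq (Fin (n - 1) ⊕ Fin (n - 1)))

theorem wheel_ends_injective {n : ℕ} (hn : 4 ≤ n) : Function.Injective (wheel n).ends := by
  rintro (a | a) (b | b) hab <;> simp only [wheel, Sym2.eq_iff, Option.some.injEq,
    reduceCtorEq, false_and, and_false, or_false, true_and, or_self] at hab
  · exact congrArg Sum.inl hab
  rcases hab with ⟨h, -⟩ | ⟨h1, h2⟩
  · exact congrArg Sum.inr h
  -- the outer cycle has length `n - 1 ≥ 3`, so `a` and `b` cannot be each other's successor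
  have ha : a.val = (b.val + 1) % (n - 1) := congrArg Fin.val h1
  have hb : (a.val + 1) % (n - 1) = b.val := congrArg Fin.val h2
  have hone : 1 % (n - 1) = 1 := Nat.mod_eq_of_lt (by omega)
  rw [Nat.add_mod_eq_ite, Nat.mod_eq_of_lt b.isLt, hone] at ha
  rw [Nat.add_mod_eq_ite, Nat.mod_eq_of_lt a.isLt, hone] at hb
  split_ifs at ha hb <;> omega

theorem exists_ne_of_mem_wheel_ends_inr {n : ℕ} {i j : Fin (n - 1)} (hji : j ≠ i)
    (hji' : j.val ≠ (i.val + 1) % (n - 1)) {v : (wheel n).V}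
    (hv : v ∈ (wheel n).ends (Sum.inr i)) : ∃ k, k ≠ j ∧ v = some k := by
  rcases Sym2.mem_iff.1 hv with rfl | rfl
  · exact ⟨i, hji.symm, rfl⟩
  · exact ⟨_, fun h => hji' (congrArg Fin.val h).symm, rfl⟩

theorem not_injective_rewire_swap_wheel {n m : ℕ} (A : Assembly m (wheel n))
    {i j : Fin (n - 1)} (hji : j ≠ i) (hji' : j.val ≠ (i.val + 1) % (n - 1)) :
    ¬ Function.Injective (A.rewire (Equiv.swap (Sum.inr i : (wheel n).E) (Sum.inl j))).ends := by
  set H := A.rewire (Equiv.swap (Sum.inr i : (wheel n).E) (Sum.inl j))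
  intro hinj
  have spoke_ends : ∀ k, k ≠ j → H.ends (Sum.inl k) = s(none, some k) := fun k hk =>
    A.rewire_ends_of_apply_eq
      (Equiv.swap_apply_of_ne_of_ne Sum.inl_ne_inr (Sum.inl_injective.ne hk))
  have hspoke : s((A.orient (Sum.inl j)).1, (A.orient (Sum.inl j)).2) = s(none, some j) :=
    (A.orient_ends (Sum.inl j)).symm
  rcases Sym2.eq_iff.1 hspoke with ⟨htail, -⟩ | ⟨-, hhead⟩
  · -- the spoke `j` now runs from the hub to the head of the cycle edge `i`
    obtain ⟨k, hkj, hk⟩ := exists_ne_of_mem_wheel_ends_inr hji hji' (A.snd_mem_ends (Sum.inr i))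
    have hpar : H.ends (Sum.inl j) = H.ends (Sum.inl k) := by
      rw [spoke_ends k hkj, ← hk, ← htail]
      exact A.rewire_swap_ends_right _ _
    exact hkj (Sum.inl_injective (hinj hpar)).symm
  · -- the cycle edge `i` now runs from its tail to the hub
    obtain ⟨k, hkj, hk⟩ := exists_ne_of_mem_wheel_ends_inr hji hji' (A.fst_mem_ends (Sum.inr i))
    have hpar : H.ends (Sum.inr i) = H.ends (Sum.inl k) := by
      rw [spoke_ends k hkj, ← hk, ← hhead]
      exact (A.rewire_swap_ends_left _ _).trans Sym2.eq_swap
    exact Sum.inr_ne_inl (hinj hpar)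

/-- If `C_min(P) = {W_n}` (up to isomorphism) with `n ≥ 5`, then in any assembly
of `W_n` from `P`, no bond-edge type appears both on an outer-cycle edge
(`Sum.inr i`) and on a spoke (`Sum.inl j`) not incident to it, i.e. if an
outer-cycle edge and a spoke share a bond-edge type then the spoke is incident
to that outer-cycle edge. -/
theorem wheel_spoke_lemma (n : ℕ) (hn : 5 ≤ n) {m : ℕ} (P : Pot m)
    (hP : Cmin P = {H | Isomorphic H (wheel n)})
    (A : Assembly m (wheel n)) (hA : ∀ v, A.tileOf v ∈ P)
    (i j : Fin (n - 1))
    (hlab : A.label (Sum.inr i) = A.label (Sum.inl j)) :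
    j = i ∨ j.val = (i.val + 1) % (n - 1) := by
  by_contra! hji
  have hW : wheel n ∈ Cmin P := hP ▸ ⟨MultigraphIso.refl _⟩
  have hmin := mem_Cmin_of_realizes hW
    (A.realizes_rewire hA (Equiv.apply_swap_eq_self hlab)) rfl
  rw [hP] at hmin
  obtain ⟨ψ⟩ := hmin
  exact not_injective_rewire_swap_wheel A hji.1 hji.2
    (ψ.ends_injective (wheel_ends_injective (by omega)))
end

section
/- Let P = {t_1, …, t_p} be a pot over bond-edge types a_1, …, a_m, and suppose a graph G is realized by P via an assembly in which, for each j, the proportion of vertices of G whose tile is t_j equals r_j. Then for every i, Σ_{j=1}^{p} r_j · z_{i,j} = 0, where z_{i,j} is the number of unhatted cohesive ends of type a_i on tile t_j minus the number of hatted cohesive ends of type a_i on tile t_j. -/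
/-- Proposition 2: if `G` is realized by the pot `{t 0, …, t (p-1)}` via an
assembly in which the proportion of vertices with tile `t j` is `r j`, then
`∑ j, r j · z i (t j) = 0` for every bond-edge type `i`. -/
theorem proportion_equations {m p : ℕ} (t : Fin p → Tile m)
    (ht : Function.Injective t)
    (G : Multigraph) (A : Assembly m G)
    (hA : ∀ v : G.V, ∃ j, A.tileOf v = t j)
    (r : Fin p → ℚ)
    (hr : ∀ j, r j =
      (Fintype.card {v : G.V // A.tileOf v = t j} : ℚ) / (Fintype.card G.V : ℚ)) :
    ∀ i : Fin m, ∑ j, r j * (zval i (t j) : ℚ) = 0 := by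
  intro i
  classical
  choose c hc using hA
  -- count of unhatted ends of type i at v
  have hcountL : ∀ v : G.V, (A.tileOf v).count (Sum.inl i) =
      ∑ e : G.E, (if (A.orient e).1 = v ∧ A.label e = i then 1 else 0) := by
    intro v
    show Multiset.count _ (Multiset.bind _ _) = _
    rw [Multiset.count_bind]
    rw [Finset.sum]
    congr 1
    apply Multiset.map_congr rfl
    intro e _
    simp only [Multiset.count_add]
    by_cases h1 : (A.orient e).1 = v <;> by_cases h2 : (A.orient e).2 = v <;>
      by_cases h3 : A.label e = i <;>
      simp [h1, h2, h3, Multiset.count_singleton] <;> simp [Ne.symm h3]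
  have hcountR : ∀ v : G.V, (A.tileOf v).count (Sum.inr i) =
      ∑ e : G.E, (if (A.orient e).2 = v ∧ A.label e = i then 1 else 0) := by
    intro v
    show Multiset.count _ (Multiset.bind _ _) = _
    rw [Multiset.count_bind]
    rw [Finset.sum]
    congr 1
    apply Multiset.map_congr rfl
    intro e _
    simp only [Multiset.count_add]
    by_cases h1 : (A.orient e).1 = v <;> by_cases h2 : (A.orient e).2 = v <;>
      by_cases h3 : A.label e = i <;>
      simp [h1, h2, h3, Multiset.count_singleton] <;> simp [Ne.symm h3]
  -- total sum of zval over vertices is zero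
  have key : ∑ v : G.V, zval i (A.tileOf v) = 0 := by
    have hL : ∑ v : G.V, ((A.tileOf v).count (Sum.inl i) : ℤ) =
        ∑ e : G.E, (if A.label e = i then (1 : ℤ) else 0) := by
      simp only [hcountL]
      push_cast
      rw [Finset.sum_comm]
      apply Finset.sum_congr rfl
      intro e _
      rw [Finset.sum_eq_single ((A.orient e).1)]
      · simp
      · intro v _ hv; simp [Ne.symm hv]
      · simp
    have hR : ∑ v : G.V, ((A.tileOf v).count (Sum.inr i) : ℤ) =
        ∑ e : G.E, (if A.label e = i then (1 : ℤ) else 0) := by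
      simp only [hcountR]
      push_cast
      rw [Finset.sum_comm]
      apply Finset.sum_congr rfl
      intro e _
      rw [Finset.sum_eq_single ((A.orient e).2)]
      · simp
      · intro v _ hv; simp [Ne.symm hv]
      · simp
    simp only [zval, Finset.sum_sub_distrib, hL, hR, sub_self]
  -- fiberwise decomposition
  have hfiber : ∀ j : Fin p,
      (Fintype.card {v : G.V // A.tileOf v = t j} : ℤ) =
        (Finset.univ.filter (fun v : G.V => c v = j)).card := by
    intro j
    rw [Fintype.card_subtype]
    have : (Finset.univ.filter fun v : G.V => A.tileOf v = t j)
        = Finset.univ.filter fun v : G.V => c v = j := by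
      apply Finset.filter_congr
      intro v _
      constructor
      · intro h; exact ht (by rw [← hc v, h])
      · intro h; rw [hc v, h]
    rw [this]
  have key2 : ∑ j, (Fintype.card {v : G.V // A.tileOf v = t j} : ℤ) * zval i (t j) = 0 := by
    calc ∑ j, (Fintype.card {v : G.V // A.tileOf v = t j} : ℤ) * zval i (t j)
        = ∑ j, ∑ v ∈ Finset.univ.filter (fun v : G.V => c v = j), zval i (t j) := by
          apply Finset.sum_congr rfl
          intro j _
          rw [Finset.sum_const, hfiber j, nsmul_eq_mul]
      _ = ∑ j, ∑ v ∈ Finset.univ.filter (fun v : G.V => c v = j), zval i (A.tileOf v) := by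
          apply Finset.sum_congr rfl
          intro j _
          apply Finset.sum_congr rfl
          intro v hv
          rw [hc v, (Finset.mem_filter.mp hv).2]
      _ = ∑ v : G.V, zval i (A.tileOf v) := Finset.sum_fiberwise _ _ _
      _ = 0 := key
  -- conclude over ℚ
  have key3 : ∑ j, (Fintype.card {v : G.V // A.tileOf v = t j} : ℚ) * (zval i (t j) : ℚ) = 0 := by
    have := congrArg (fun z : ℤ => (z : ℚ)) key2
    push_cast at this
    simpa using this
  simp only [hr, div_mul_eq_mul_div]
  rw [← Finset.sum_div, key3, zero_div]
end

section
/- Let P = {t_1, …, t_p} be a pot over bond-edge types a_1, …, a_m. If a graph G of order n is realized by P via an assembly using exactly R_j vertices with tile type t_j for each j, then the vector (1/n)·(R_1, R_2, …, R_p) is a solution of the construction matrix of P; that is, Σ_{j=1}^{p} (R_j/n)·z_{i,j} = 0 for every i, and Σ_{j=1}^{p} R_j/n = 1. -/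
/-- Proposition 3(1): if a graph `G` of order `n` is realized by the pot
`{t 0, …, t (p-1)}` using exactly `R j` vertices of tile type `t j`, then
`(1/n)·(R 0, …, R (p-1))` is a solution of the construction matrix of the pot. -/
theorem construction_matrix_solution {m p : ℕ} (t : Fin p → Tile m)
    (ht : Function.Injective t)
    (G : Multigraph) (n : ℕ) (hn : G.order = n)
    (A : Assembly m G) (hA : ∀ v : G.V, ∃ j, A.tileOf v = t j)
    (R : Fin p → ℕ)
    (hR : ∀ j, R j = Fintype.card {v : G.V // A.tileOf v = t j}) :
    (∀ i : Fin m, ∑ j, ((R j : ℚ) / (n : ℚ)) * (zval i (t j) : ℚ) = 0) ∧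
      ∑ j, (R j : ℚ) / (n : ℚ) = 1 := by
  classical
  have hn0 : 0 < n := by
    rw [← hn]; exact Fintype.card_pos
  have hnQ : (n : ℚ) ≠ 0 := Nat.cast_ne_zero.mpr hn0.ne'
  set f : G.V → Fin p := fun v => (hA v).choose with hf
  have hfv : ∀ v, A.tileOf v = t (f v) := fun v => (hA v).choose_spec
  have hfiber : ∀ (j : Fin p) (v : G.V), A.tileOf v = t j ↔ f v = j := by
    intro j v
    constructor
    · intro h; exact ht (by rw [← hfv v, h])
    · intro h; rw [hfv v, h]
  have hRcard : ∀ j, R j = (Finset.univ.filter (fun v => f v = j)).card := by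
    intro j
    rw [hR j, Fintype.card_subtype]
    congr 1
    ext v
    simp [hfiber]
  have hsumR : ∑ j, R j = n := by
    rw [← hn]
    simp only [hRcard]
    rw [← Finset.card_eq_sum_card_fiberwise
      (f := f) (fun v _ => Finset.mem_univ (f v))]
    rfl
  have hcountL : ∀ (i : Fin m) (v : G.V), (A.tileOf v).count (Sum.inl i) =
      ∑ e : G.E, (if (A.orient e).1 = v ∧ A.label e = i then 1 else 0) := by
    intro i v
    unfold Assembly.tileOf
    rw [Multiset.count_bind]
    show ∑ e : G.E, Multiset.count _ _ = _
    apply Finset.sum_congr rfl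
    intro e _
    rw [Multiset.count_add]
    by_cases h1 : (A.orient e).1 = v <;> by_cases h2 : (A.orient e).2 = v <;>
      by_cases h3 : A.label e = i <;>
      (simp [h1, h2, h3, Multiset.count_singleton] <;>
        exact fun h => h3 h.symm)
  have hcountR : ∀ (i : Fin m) (v : G.V), (A.tileOf v).count (Sum.inr i) =
      ∑ e : G.E, (if (A.orient e).2 = v ∧ A.label e = i then 1 else 0) := by
    intro i v
    unfold Assembly.tileOf
    rw [Multiset.count_bind]
    show ∑ e : G.E, Multiset.count _ _ = _
    apply Finset.sum_congr rfl
    intro e _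
    rw [Multiset.count_add]
    by_cases h1 : (A.orient e).1 = v <;> by_cases h2 : (A.orient e).2 = v <;>
      by_cases h3 : A.label e = i <;>
      (simp [h1, h2, h3, Multiset.count_singleton] <;>
        exact fun h => h3 h.symm)
  have hzv : ∀ (i : Fin m) (v : G.V), zval i (A.tileOf v) =
      ∑ e : G.E, ((if (A.orient e).1 = v ∧ A.label e = i then (1:ℤ) else 0)
        - (if (A.orient e).2 = v ∧ A.label e = i then (1:ℤ) else 0)) := by
    intro i v
    rw [zval, hcountL, hcountR, Finset.sum_sub_distrib]
    push_cast
    rfl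
  have hzero : ∀ i : Fin m, ∑ v : G.V, zval i (A.tileOf v) = 0 := by
    intro i
    simp only [hzv]
    rw [Finset.sum_comm]
    apply Finset.sum_eq_zero
    intro e _
    rw [Finset.sum_sub_distrib]
    have h1 : ∑ v : G.V, (if (A.orient e).1 = v ∧ A.label e = i then (1:ℤ) else 0)
        = if A.label e = i then 1 else 0 := by
      simp [ite_and]
    have h2 : ∑ v : G.V, (if (A.orient e).2 = v ∧ A.label e = i then (1:ℤ) else 0)
        = if A.label e = i then 1 else 0 := by
      simp [ite_and]
    rw [h1, h2, sub_self]
  have key : ∀ i : Fin m, ∑ j, (R j : ℤ) * zval i (t j) = 0 := by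
    intro i
    rw [← hzero i, ← Finset.sum_fiberwise_of_maps_to (g := f)
      (fun v _ => Finset.mem_univ (f v)) (fun v => zval i (A.tileOf v))]
    apply Finset.sum_congr rfl
    intro j _
    rw [Finset.sum_congr rfl (fun v hv => by
      rw [hfv v, (Finset.mem_filter.mp hv).2]),
      Finset.sum_const, hRcard j, nsmul_eq_mul]
  constructor
  · intro i
    have hQ : (∑ j, (R j : ℚ) * (zval i (t j) : ℚ)) = 0 := by
      exact_mod_cast congrArg (fun x : ℤ => (x : ℚ)) (key i)
    calc ∑ j, ((R j : ℚ) / (n : ℚ)) * (zval i (t j) : ℚ)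
        = (∑ j, (R j : ℚ) * (zval i (t j) : ℚ)) / (n : ℚ) := by
          rw [Finset.sum_div]; apply Finset.sum_congr rfl; intro j _; ring
      _ = 0 := by rw [hQ, zero_div]
  · rw [← Finset.sum_div]
    rw [show (∑ j, (R j : ℚ)) = ((∑ j, R j : ℕ) : ℚ) from by push_cast; rfl, hsumR]
    exact div_self hnQ
end

section
/- Let P = {t_1, …, t_p} be a pot such that C(P) is nonempty. Then m_P, the minimum order of a multigraph realized by P, equals the minimum over all solutions (r_1, …, r_p) of the construction matrix M(P) with r_j ≥ 0 for all j of lcm{ b_j : r_j ≠ 0, where r_j = a_j/b_j in lowest terms }. -/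
open Finset in
lemma count_tileOf_inl {m : ℕ} {G : Multigraph} (A : Assembly m G) (v : G.V) (i : Fin m) :
    (A.tileOf v).count (Sum.inl i) =
      ∑ e : G.E, (if (A.orient e).1 = v ∧ A.label e = i then 1 else 0) := by
  classical
  rw [Assembly.tileOf, Multiset.count_bind]
  show (Multiset.map _ Finset.univ.val).sum = Finset.sum Finset.univ _
  rw [← Finset.sum_map_val]
  refine Finset.sum_congr rfl fun e _ => ?_
  simp only [Multiset.count_add, apply_ite (Multiset.count (Sum.inl i : Fin m ⊕ Fin m)),
    Multiset.count_singleton, Multiset.count_zero, Sum.inl.injEq]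
  split_ifs with h1 h2 h3 h4 h5 <;> simp_all <;> omega

open Finset in
lemma count_tileOf_inr {m : ℕ} {G : Multigraph} (A : Assembly m G) (v : G.V) (i : Fin m) :
    (A.tileOf v).count (Sum.inr i) =
      ∑ e : G.E, (if (A.orient e).2 = v ∧ A.label e = i then 1 else 0) := by
  classical
  rw [Assembly.tileOf, Multiset.count_bind]
  show (Multiset.map _ Finset.univ.val).sum = Finset.sum Finset.univ _
  rw [← Finset.sum_map_val]
  refine Finset.sum_congr rfl fun e _ => ?_
  simp only [Multiset.count_add, apply_ite (Multiset.count (Sum.inr i : Fin m ⊕ Fin m)),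
    Multiset.count_singleton, Multiset.count_zero, Sum.inr.injEq]
  split_ifs with h1 h2 h3 h4 h5 <;> simp_all <;> omega

open Finset in
lemma exists_realizes {m p : ℕ} (t : Fin p → Tile m) (P : Pot m)
    (hPt : P = Finset.image t Finset.univ)
    (n : Fin p → ℕ) (hpos : 0 < ∑ j, n j)
    (hz : ∀ i : Fin m, ∑ j, (n j : ℤ) * zval i (t j) = 0) :
    ∃ G : Multigraph, Realizes P G ∧ G.order = ∑ j, n j := by
  classical
  have hcnt : ∀ i : Fin m,
      Fintype.card (Σ v : Σ j : Fin p, Fin (n j), Fin ((t v.1).count (Sum.inl i)))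
      = Fintype.card (Σ v : Σ j : Fin p, Fin (n j), Fin ((t v.1).count (Sum.inr i))) := by
    intro i
    have h := hz i
    simp only [zval, mul_sub] at h
    rw [Finset.sum_sub_distrib, sub_eq_zero] at h
    have h' : ∑ j, n j * ((t j).count (Sum.inl i)) = ∑ j, n j * ((t j).count (Sum.inr i)) := by
      exact_mod_cast h
    simp only [Fintype.card_sigma, Fintype.card_fin]
    rw [← Finset.univ_sigma_univ, Finset.sum_sigma, Finset.sum_sigma]
    simpa [Finset.sum_const, mul_comm] using h'
  set V := Σ j : Fin p, Fin (n j) with hV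
  have hNV : Nonempty V := by
    rw [← Fintype.card_pos_iff]
    have : Fintype.card V = ∑ j, n j := by simp [hV, Fintype.card_sigma]
    omega
  let φ : ∀ i : Fin m,
      (Σ v : V, Fin ((t v.1).count (Sum.inl i))) ≃ (Σ v : V, Fin ((t v.1).count (Sum.inr i))) :=
    fun i => Fintype.equivOfCardEq (hcnt i)
  let G : Multigraph :=
    { V := V
      E := Σ i : Fin m, Σ v : V, Fin ((t v.1).count (Sum.inl i))
      nonemptyV := hNV
      ends := fun e => s(e.2.1, ((φ e.1) e.2).1) }
  let A : Assembly m G := ⟨fun e => (e.2.1, ((φ e.1) e.2).1), fun e => e.1, fun _ => rfl⟩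
  have htile : ∀ v : G.V, A.tileOf v = t v.1 := by
    intro v
    ext a
    obtain i | i := a
    · rw [count_tileOf_inl]
      show (∑ e : Σ i : Fin m, Σ v : V, Fin ((t v.1).count (Sum.inl i)),
          if e.2.1 = v ∧ e.1 = i then 1 else 0) = _
      rw [← Finset.univ_sigma_univ, Finset.sum_sigma]
      rw [Finset.sum_eq_single i]
      · rw [← Finset.univ_sigma_univ, Finset.sum_sigma]
        rw [Finset.sum_eq_single v]
        · simp
        · intro w _ hw; simp [hw]
        · simp
      · intro i' _ hi'; apply Finset.sum_eq_zero; intro o _; simp [hi']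
      · simp
    · rw [count_tileOf_inr]
      show (∑ e : Σ i : Fin m, Σ v : V, Fin ((t v.1).count (Sum.inl i)),
          if ((φ e.1) e.2).1 = v ∧ e.1 = i then 1 else 0) = _
      rw [← Finset.univ_sigma_univ, Finset.sum_sigma]
      rw [Finset.sum_eq_single i]
      · rw [show (∑ o : Σ w : V, Fin ((t w.1).count (Sum.inl i)),
            if ((φ i) o).1 = v ∧ i = i then 1 else 0)
            = ∑ u : Σ w : V, Fin ((t w.1).count (Sum.inr i)),
              if u.1 = v ∧ i = i then 1 else 0 from
          Fintype.sum_equiv (φ i) _ _ (fun o => rfl)]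
        rw [← Finset.univ_sigma_univ, Finset.sum_sigma]
        rw [Finset.sum_eq_single v]
        · simp
        · intro w _ hw; simp [hw]
        · simp
      · intro i' _ hi'; apply Finset.sum_eq_zero; intro o _; simp [hi']
      · simp
  refine ⟨G, ⟨A, fun v => ?_⟩, ?_⟩
  · rw [htile v, hPt]
    exact Finset.mem_image.mpr ⟨v.1, Finset.mem_univ _, rfl⟩
  · show Fintype.card V = _
    simp [hV, Fintype.card_sigma]

open Finset in
lemma solution_of_realizes {m p : ℕ} (t : Fin p → Tile m) (ht : Function.Injective t)
    (P : Pot m) (hPt : P = Finset.image t Finset.univ)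
    {G : Multigraph} (hG : Realizes P G) :
    ∃ r : Fin p → ℚ, (∀ i : Fin m, ∑ j, r j * (zval i (t j) : ℚ) = 0) ∧ (∑ j, r j = 1) ∧
      (∀ j, 0 ≤ r j) ∧
      ((Finset.univ.filter (fun j => r j ≠ 0)).lcm (fun j => (r j).den)) ∣ G.order := by
  classical
  obtain ⟨A, hA⟩ := hG
  set N := Fintype.card G.V with hN
  have hN0 : 0 < N := Fintype.card_pos
  -- unique index for each vertex
  have hidx : ∀ v : G.V, ∃ j : Fin p, A.tileOf v = t j := by
    intro v
    have := hA v
    rw [hPt, Finset.mem_image] at this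
    obtain ⟨j, _, hj⟩ := this
    exact ⟨j, hj.symm⟩
  choose idx hidx' using hidx
  have hiff : ∀ (v : G.V) (j : Fin p), (A.tileOf v = t j) ↔ j = idx v := by
    intro v j
    constructor
    · intro h; exact ht (h.symm.trans (hidx' v))
    · rintro rfl; exact hidx' v
  set c : Fin p → ℕ := fun j => (Finset.univ.filter fun v : G.V => A.tileOf v = t j).card
    with hc
  have hcsum_gen : ∀ f : Fin p → ℕ, ∑ j, c j * f j = ∑ v : G.V, f (idx v) := by
    intro f
    have : ∀ j, c j * f j = ∑ v : G.V, if A.tileOf v = t j then f j else 0 := by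
      intro j
      rw [Finset.sum_ite, Finset.sum_const, Finset.sum_const]
      simp [hc, mul_comm]
    rw [Finset.sum_congr rfl fun j _ => this j, Finset.sum_comm]
    refine Finset.sum_congr rfl fun v _ => ?_
    rw [Finset.sum_congr rfl fun j _ => if_congr (hiff v j) rfl rfl]
    simp
  have hcsum : ∑ j, c j = N := by
    have h := hcsum_gen (fun _ => 1)
    simp only [mul_one] at h
    rw [h, hN, Fintype.card, Finset.card_eq_sum_ones]
  -- counts
  have hcount : ∀ (a : Fin m ⊕ Fin m) (v : G.V),
      (t (idx v)).count a = (A.tileOf v).count a := by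
    intro a v; rw [hidx' v]
  have hedge : ∀ i : Fin m,
      (∑ v : G.V, (A.tileOf v).count (Sum.inl i)) = ∑ e : G.E, (if A.label e = i then 1 else 0) ∧
      (∑ v : G.V, (A.tileOf v).count (Sum.inr i)) = ∑ e : G.E, (if A.label e = i then 1 else 0) := by
    intro i
    constructor
    · rw [Finset.sum_congr rfl fun v _ => count_tileOf_inl A v i, Finset.sum_comm]
      refine Finset.sum_congr rfl fun e _ => ?_
      by_cases h : A.label e = i
      · simp only [h, and_true]
        rw [Finset.sum_ite_eq (Finset.univ) ((A.orient e).1) (fun _ => 1)]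
        simp
      · simp [h]
    · rw [Finset.sum_congr rfl fun v _ => count_tileOf_inr A v i, Finset.sum_comm]
      refine Finset.sum_congr rfl fun e _ => ?_
      by_cases h : A.label e = i
      · simp only [h, and_true]
        rw [Finset.sum_ite_eq (Finset.univ) ((A.orient e).2) (fun _ => 1)]
        simp
      · simp [h]
  have hzc : ∀ i : Fin m, ∑ j, (c j : ℤ) * zval i (t j) = 0 := by
    intro i
    have h1 : ∑ j, c j * (t j).count (Sum.inl i) = ∑ j, c j * (t j).count (Sum.inr i) := by
      rw [hcsum_gen (fun j => (t j).count (Sum.inl i)),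
        hcsum_gen (fun j => (t j).count (Sum.inr i))]
      rw [Finset.sum_congr rfl fun v _ => hcount (Sum.inl i) v,
        Finset.sum_congr rfl fun v _ => hcount (Sum.inr i) v]
      rw [(hedge i).1, (hedge i).2]
    simp only [zval, mul_sub]
    rw [Finset.sum_sub_distrib, sub_eq_zero]
    exact_mod_cast h1
  refine ⟨fun j => (c j : ℚ) / (N : ℚ), ?_, ?_, ?_, ?_⟩
  · intro i
    have : ∑ j, ((c j : ℚ) / N) * (zval i (t j) : ℚ)
        = (∑ j, (c j : ℚ) * (zval i (t j) : ℚ)) / N := by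
      rw [Finset.sum_div]
      exact Finset.sum_congr rfl fun j _ => by ring
    rw [this]
    have : (∑ j, (c j : ℚ) * (zval i (t j) : ℚ)) = 0 := by
      exact_mod_cast congrArg (fun z : ℤ => (z : ℚ)) (hzc i)
    rw [this, zero_div]
  · rw [← Finset.sum_div]
    have : (∑ j, (c j : ℚ)) = (N : ℚ) := by exact_mod_cast hcsum
    rw [this]
    exact div_self (by positivity)
  · intro j; positivity
  · apply Finset.lcm_dvd
    intro j _
    have h := Rat.den_dvd (c j : ℤ) (N : ℤ)
    rw [Rat.divInt_eq_div] at h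
    have h2 : (((c j : ℤ) : ℚ) / ((N : ℤ) : ℚ)).den ∣ N := Int.natCast_dvd_natCast.mp h
    have h3 : (((c j : ℤ) : ℚ) / ((N : ℤ) : ℚ)) = ((c j : ℚ) / (N : ℚ)) := by push_cast; ring
    rwa [h3] at h2

/-- Proposition 3(3): if `C(P)` is nonempty for the pot `P = {t 0, …, t (p-1)}`,
then `m_P` is the minimum, over all nonnegative solutions `(r 0, …, r (p-1))`
of the construction matrix, of `lcm { b j : r j ≠ 0 }`, where `r j = a j / b j`
in lowest terms. -/
theorem mP_eq_min_lcm {m p : ℕ} (t : Fin p → Tile m)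
    (ht : Function.Injective t)
    (P : Pot m) (hPt : P = Finset.image t Finset.univ)
    (hC : ∃ G : Multigraph, Realizes P G) :
    mP P = sInf {L | ∃ r : Fin p → ℚ,
      (∀ i : Fin m, ∑ j, r j * (zval i (t j) : ℚ) = 0) ∧ (∑ j, r j = 1) ∧
      (∀ j, 0 ≤ r j) ∧
      L = (Finset.univ.filter (fun j => r j ≠ 0)).lcm (fun j => (r j).den)} := by
  classical
  have hTne : {n | ∃ G ∈ CSet P, G.order = n}.Nonempty := by
    obtain ⟨G, hG⟩ := hC; exact ⟨G.order, G, hG, rfl⟩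
  have hSne : {L | ∃ r : Fin p → ℚ,
      (∀ i : Fin m, ∑ j, r j * (zval i (t j) : ℚ) = 0) ∧ (∑ j, r j = 1) ∧
      (∀ j, 0 ≤ r j) ∧
      L = (Finset.univ.filter (fun j => r j ≠ 0)).lcm (fun j => (r j).den)}.Nonempty := by
    obtain ⟨G, hG⟩ := hC
    obtain ⟨r, h1, h2, h3, _⟩ := solution_of_realizes t ht P hPt hG
    exact ⟨_, r, h1, h2, h3, rfl⟩
  apply le_antisymm
  · refine le_csInf hSne ?_
    rintro L ⟨r, h1, h2, h3, hL⟩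
    have hL0 : L ≠ 0 := by
      rw [hL]; intro h
      rw [Finset.lcm_eq_zero_iff] at h
      obtain ⟨j, -, hj⟩ := h
      exact (r j).den_nz hj
    have hdvd : ∀ j, r j ≠ 0 → ((r j).den : ℕ) ∣ L := fun j hj =>
      hL ▸ Finset.dvd_lcm (Finset.mem_filter.mpr ⟨Finset.mem_univ j, hj⟩)
    set n : Fin p → ℕ := fun j => (r j * L).num.toNat with hn
    have hnq : ∀ j, ((n j : ℚ)) = r j * L := by
      intro j
      by_cases hj : r j = 0
      · simp [hn, hj]
      · obtain ⟨k, hk⟩ := hdvd j hj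
        have hval : r j * L = (((r j).num * k : ℤ) : ℚ) := by
          rw [hk]
          push_cast
          rw [← mul_assoc, Rat.mul_den_eq_num]
        have hnonneg : (0 : ℤ) ≤ (r j).num * k := by
          have : (0:ℚ) ≤ (((r j).num * k : ℤ) : ℚ) := by
            rw [← hval]; exact mul_nonneg (h3 j) (by positivity)
          exact_mod_cast this
        show (((r j * (L:ℚ)).num.toNat : ℕ) : ℚ) = r j * (L:ℚ)
        rw [hval]
        rw [Rat.num_intCast]
        exact_mod_cast Int.toNat_of_nonneg hnonneg
    have hsumL : ∑ j, n j = L := by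
      have hsumq : ((∑ j, n j : ℕ) : ℚ) = (L : ℚ) := by
        push_cast
        rw [Finset.sum_congr rfl fun j _ => hnq j, ← Finset.sum_mul, h2, one_mul]
      exact_mod_cast hsumq
    have hzn : ∀ i : Fin m, ∑ j, (n j : ℤ) * zval i (t j) = 0 := by
      intro i
      have : ((∑ j, (n j : ℤ) * zval i (t j) : ℤ) : ℚ) = 0 := by
        push_cast
        rw [Finset.sum_congr rfl fun j _ => by rw [hnq j]]
        rw [show (∑ j, (r j * (L:ℚ)) * (zval i (t j) : ℚ))
            = (L:ℚ) * ∑ j, r j * (zval i (t j) : ℚ) from by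
          rw [Finset.mul_sum]; exact Finset.sum_congr rfl fun j _ => by ring]
        rw [h1 i, mul_zero]
      exact_mod_cast this
    obtain ⟨G, hG, hord⟩ := exists_realizes t P hPt n (hsumL ▸ Nat.pos_of_ne_zero hL0) hzn
    exact Nat.sInf_le ⟨G, hG, hord.trans hsumL⟩
  · obtain ⟨G, hG, hord⟩ := Nat.sInf_mem hTne
    obtain ⟨r, h1, h2, h3, hdvd⟩ := solution_of_realizes t ht P hPt hG
    calc sInf _ ≤ (Finset.univ.filter (fun j => r j ≠ 0)).lcm (fun j => (r j).den) :=
          Nat.sInf_le (Set.mem_setOf.mpr ⟨r, h1, h2, h3, rfl⟩)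
      _ ≤ G.order := Nat.le_of_dvd Fintype.card_pos hdvd
      _ = mP P := hord
end

section
/- Let n ≥ 5 and let P = {t_1, t_2} be the pot over the single bond-edge type a with t_1 = {a, â, â} (one unhatted a and two hatted a) and t_2 = {a^{n-1}} (n−1 unhatted a). Then the wheel graph W_n is realized by P, using one copy of tile t_2 (on the hub) and n−1 copies of tile t_1 (on the outer-cycle vertices). -/
/-!
Label every edge `a`, orient each spoke away from the hub and each rim edge along the cycle.
Then the hub has `n - 1` outgoing edges and no incoming one, while each rim vertex has one
outgoing edge (its rim edge) and two incoming ones (its spoke and the previous rim edge).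
-/

theorem Assembly.tileOf_eq_replicate_of_label_eq {m : ℕ} {G : Multigraph} (A : Assembly m G)
    {a : Fin m} (hA : ∀ e, A.label e = a) (v : G.V) :
    A.tileOf v =
      Multiset.replicate (Finset.univ.filter fun e => (A.orient e).1 = v).card (Sum.inl a) +
      Multiset.replicate (Finset.univ.filter fun e => (A.orient e).2 = v).card (Sum.inr a) := by
  simp only [Assembly.tileOf, hA, Multiset.bind_add, ← Multiset.nsmul_singleton,
    ← Finset.sum_const, Finset.sum_filter]
  rfl

/-- Written with `%` as in the edges of `wheel n`: the cleaner `i + 1` needs `NeZero (n - 1)`. -/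
def wheelSucc (n : ℕ) (i : Fin (n - 1)) : Fin (n - 1) :=
  ⟨(i.val + 1) % (n - 1), Nat.mod_lt _ (by have := i.isLt; omega)⟩

theorem wheelSucc_eq_add_one {n : ℕ} [NeZero (n - 1)] (i : Fin (n - 1)) :
    wheelSucc n i = i + 1 := by
  ext
  simp [wheelSucc, Fin.val_add]

def wheelAssembly (n : ℕ) : Assembly 1 (wheel n) where
  orient
    | Sum.inl i => (none, some i)
    | Sum.inr i => (some i, some (wheelSucc n i))
  label _ := 0
  orient_ends e := by cases e <;> rfl

/-- The counts of `Assembly.tileOf_eq_replicate_of_label_eq` restated over `Option (Fin (n - 1))`: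
simp cannot see through `(wheel n).V` to decide the vertex equalities. -/
theorem wheelAssembly_tileOf (n : ℕ) (v : Option (Fin (n - 1))) :
    (wheelAssembly n).tileOf v =
      Multiset.replicate (∑ i : Fin (n - 1),
        ((if none = v then 1 else 0) + if some i = v then 1 else 0)) (Sum.inl 0) +
      Multiset.replicate (∑ i : Fin (n - 1),
        ((if some i = v then 1 else 0) + if some (wheelSucc n i) = v then 1 else 0))
        (Sum.inr 0) := by
  refine ((wheelAssembly n).tileOf_eq_replicate_of_label_eq (fun _ => rfl) v).trans ?_
  rw [Finset.card_filter, Finset.card_filter]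
  erw [Fintype.sum_sum_type, Fintype.sum_sum_type, ← Finset.sum_add_distrib,
    ← Finset.sum_add_distrib]
  rfl

theorem wheelAssembly_tileOf_none (n : ℕ) :
    (wheelAssembly n).tileOf none = Multiset.replicate (n - 1) (Sum.inl 0) := by
  simp [wheelAssembly_tileOf]

theorem wheelAssembly_tileOf_some (n : ℕ) (j : Fin (n - 1)) :
    (wheelAssembly n).tileOf (some j) = ({Sum.inl 0, Sum.inr 0, Sum.inr 0} : Tile 1) := by
  have : NeZero (n - 1) := ⟨j.pos.ne'⟩
  simp [wheelAssembly_tileOf, Finset.sum_add_distrib, wheelSucc_eq_add_one, ← eq_sub_iff_add_eq]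
  exact Multiset.cons_swap _ _ _

theorem wheel_realized_scenario12_pot_general (n : ℕ) :
    ∃ A : Assembly 1 (wheel n),
      (∀ v, A.tileOf v ∈
        ({({Sum.inl 0, Sum.inr 0, Sum.inr 0} : Tile 1),
          Multiset.replicate (n - 1) (Sum.inl (0 : Fin 1))} : Pot 1)) ∧
      A.tileOf (none : Option (Fin (n - 1))) =
        Multiset.replicate (n - 1) (Sum.inl (0 : Fin 1)) ∧
      ∀ i : Fin (n - 1),
        A.tileOf (some i) = ({Sum.inl 0, Sum.inr 0, Sum.inr 0} : Tile 1) := by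
  refine ⟨wheelAssembly n, ?_, wheelAssembly_tileOf_none n, wheelAssembly_tileOf_some n⟩
  rintro (_ | j)
  · simp [wheelAssembly_tileOf_none]
  · simp [wheelAssembly_tileOf_some]

/-- For `n ≥ 5`, the pot `P = {t₁, t₂}` over one bond-edge type, with
`t₁ = {a, â, â}` and `t₂ = {a^{n-1}}`, realizes the wheel graph `W_n` using
tile `t₂` on the hub (`none`) and tile `t₁` on each of the `n-1` outer-cycle
vertices. -/
theorem wheel_realized_scenario12_pot (n : ℕ) (hn : 5 ≤ n) :
    ∃ A : Assembly 1 (wheel n),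
      (∀ v, A.tileOf v ∈
        ({({Sum.inl 0, Sum.inr 0, Sum.inr 0} : Tile 1),
          Multiset.replicate (n - 1) (Sum.inl (0 : Fin 1))} : Pot 1)) ∧
      A.tileOf (none : Option (Fin (n - 1))) =
        Multiset.replicate (n - 1) (Sum.inl (0 : Fin 1)) ∧
      ∀ i : Fin (n - 1),
        A.tileOf (some i) = ({Sum.inl 0, Sum.inr 0, Sum.inr 0} : Tile 1) :=
  wheel_realized_scenario12_pot_general n
end

section
/- Let n ≥ 6 be even and let P_even be the pot over bond-edge types a_1, …, a_{n/2+1} consisting of the n/2+2 tiles t_1 = {a_1^{n-1}}, t_2 = {â_1, a_2, a_2}, t_i = {â_1, â_{i-1}, a_i} for 3 ≤ i ≤ n/2+1, and t_{n/2+2} = {â_1, â_{n/2}, â_{n/2+1}}. Then the construction matrix M(P_even) has the unique solution (1/n, 1/n, 2/n, …, 2/n, 1/n, 1/n), where the entry 2/n occurs in coordinates 3 through n/2, and consequently m_{P_even} = n. -/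
/-!
For every bond-edge type `a`, the unhatted `a`-ends and the hatted `a`-ends of an assembly are
both in bijection with the `a`-labelled edges. So the tile multiplicities of a realization form a
nonnegative integer solution of the homogeneous part of `M(P)`, and conversely every such solution
is realized by pairing the unhatted `a`-ends with the hatted `a`-ends in any way.

For `P_even` the rows of `a_2, …, a_{n/2+1}` propagate along the chain of tiles and force a
homogeneous solution to be proportional to `(1, 1, 2, …, 2, 1, 1)`, whose entries sum to `n`; the
row of `a_1` fixes the first coordinate. Hence every realization has `c * n` vertices for some
`c ≥ 1`, and `c = 1` is realized.
-/

open Finset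

namespace Assembly

variable {m : ℕ} {G : Multigraph} (A : Assembly m G)

theorem count_inl_tileOf (v : G.V) (a : Fin m) :
    (A.tileOf v).count (Sum.inl a) = #{e | A.label e = a ∧ (A.orient e).1 = v} := by
  rw [tileOf, Multiset.count_bind, card_filter]
  refine Finset.sum_congr rfl fun e _ => ?_
  by_cases ha : A.label e = a <;> split_ifs <;> simp_all [Ne.symm]

theorem count_inr_tileOf (v : G.V) (a : Fin m) :
    (A.tileOf v).count (Sum.inr a) = #{e | A.label e = a ∧ (A.orient e).2 = v} := by
  rw [tileOf, Multiset.count_bind, card_filter]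
  refine Finset.sum_congr rfl fun e _ => ?_
  by_cases ha : A.label e = a <;> split_ifs <;> simp_all [Ne.symm]

theorem sum_zval_tileOf (a : Fin m) : ∑ v, zval a (A.tileOf v) = 0 := by
  simp only [zval, count_inl_tileOf, count_inr_tileOf, sum_sub_distrib, ← Nat.cast_sum,
    ← filter_filter, ← card_eq_sum_card_fiberwise fun _ _ => mem_univ _, sub_self]

end Assembly

theorem card_filter_sigma_fst_eq {V : Type*} [Fintype V] [DecidableEq V] (f : V → ℕ) (v : V) :
    #{p : Σ w, Fin (f w) | p.1 = v} = f v := by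
  rw [card_filter, Fintype.sum_sigma]
  simp [apply_ite]

theorem card_filter_sigma_fst_eq_and {α : Type*} [Fintype α] [DecidableEq α] {β : α → Type*}
    [∀ a, Fintype (β a)] (a : α) (q : ∀ a, β a → Prop) [∀ a b, Decidable (q a b)] :
    #{e : Σ a, β a | e.1 = a ∧ q e.1 e.2} = #{b : β a | q a b} := by
  rw [card_filter, card_filter, Fintype.sum_sigma, Fintype.sum_eq_single a]
  · simp
  · intro b hb
    simp [hb]

theorem exists_realizes_of_sum_zval_eq_zero {m : ℕ} {V : Type} [Fintype V] [DecidableEq V]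
    [Nonempty V] {P : Pot m} (τ : V → Tile m) (hτ : ∀ v, τ v ∈ P)
    (hτ_bal : ∀ a, ∑ v, zval a (τ v) = 0) : ∃ G ∈ CSet P, G.order = Fintype.card V := by
  let Port (x : Fin m ⊕ Fin m) := Σ v : V, Fin ((τ v).count x)
  have hcard (a : Fin m) : Fintype.card (Port (.inl a)) = Fintype.card (Port (.inr a)) := by
    have := hτ_bal a
    simp only [zval, sum_sub_distrib, sub_eq_zero] at this
    simp only [Port, Fintype.card_sigma, Fintype.card_fin]
    exact_mod_cast this
  let σ (a : Fin m) := Fintype.equivOfCardEq (hcard a)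
  let G : Multigraph :=
    { V := V, E := Σ a, Port (.inl a), ends := fun e => s(e.2.1, (σ e.1 e.2).1) }
  let A : Assembly m G :=
    { orient := fun e => (e.2.1, (σ e.1 e.2).1), label := Sigma.fst, orient_ends := fun _ => rfl }
  refine ⟨G, ⟨A, fun v => ?_⟩, rfl⟩
  suffices A.tileOf v = τ v from this ▸ hτ v
  ext (a | a)
  · rw [A.count_inl_tileOf]
    exact (card_filter_sigma_fst_eq_and a fun _ (p : Port _) => p.1 = v).trans
      (card_filter_sigma_fst_eq _ v)
  · rw [A.count_inr_tileOf]
    refine (card_filter_sigma_fst_eq_and a fun a p => (σ a p).1 = v).trans ?_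
    rw [card_filter, (σ a).sum_comp fun q => if q.1 = v then 1 else 0, ← card_filter]
    exact card_filter_sigma_fst_eq _ v

/-- `r` solves the homogeneous rows of the construction matrix `M(P)` of the pot `P = range t`. -/
def IsBalanced {m : ℕ} {ι R : Type*} [Fintype ι] [CommRing R] (t : ι → Tile m) (r : ι → R) :
    Prop :=
  ∀ i : Fin m, ∑ j, r j * (zval i (t j) : R) = 0

section Balanced

variable {m : ℕ} {ι : Type} [Fintype ι] [DecidableEq ι] {t : ι → Tile m}

theorem Realizes.exists_isBalanced (R : Type*) [CommRing R] {G : Multigraph}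
    (h : Realizes (univ.image t) G) :
    ∃ c : ι → ℕ, ∑ j, c j = G.order ∧ IsBalanced t fun j => (c j : R) := by
  obtain ⟨A, hA⟩ := h
  choose φ hφ using fun v => mem_image.mp (hA v)
  refine ⟨fun j => #{v | φ v = j}, ?_, fun a => ?_⟩
  · exact (card_eq_sum_card_fiberwise fun v _ => mem_univ (φ v)).symm
  · have key : ∑ j, (#{v | φ v = j} : ℤ) * zval a (t j) = 0 := by
      simp_rw [← A.sum_zval_tileOf a, ← (hφ _).2, ← sum_fiberwise univ φ fun v => zval a (t (φ v))]
      refine sum_congr rfl fun j _ => ?_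
      rw [sum_congr rfl fun v hv => by rw [(mem_filter.mp hv).2], sum_const, nsmul_eq_mul]
    simpa using congrArg (Int.cast : ℤ → R) key

theorem exists_realizes_of_isBalanced (c : ι → ℕ) (hc : IsBalanced t fun j => (c j : ℤ))
    (hpos : 0 < ∑ j, c j) : ∃ G ∈ CSet (univ.image t), G.order = ∑ j, c j := by
  obtain ⟨j, -, hj⟩ := sum_pos_iff.mp hpos
  have : Nonempty (Σ j, Fin (c j)) := ⟨⟨j, ⟨0, hj⟩⟩⟩
  have hcard : Fintype.card (Σ j, Fin (c j)) = ∑ j, c j := by simp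
  refine hcard ▸ exists_realizes_of_sum_zval_eq_zero (fun v => t v.1)
    (fun v => mem_image_of_mem t (mem_univ _)) fun a => ?_
  simpa [Fintype.sum_sigma] using hc a

end Balanced

section EvenPot

/-- The pot `P_even` for `n = 2 * k`, indexed from `0`: `evenPot k j` is the paper's `t_{j+1}` and
bond-edge type `i` is `a_{i+1}`. -/
def evenPot (k : ℕ) (j : Fin (k + 2)) : Tile (k + 1) :=
  if hj : j.val ≤ k then
    if j.val = 0 then Multiset.replicate (2 * k - 1) (Sum.inl ⟨0, by omega⟩)
    else if h1 : j.val = 1 then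
      {Sum.inr ⟨0, by omega⟩, Sum.inl ⟨1, by omega⟩, Sum.inl ⟨1, by omega⟩}
    else {Sum.inr ⟨0, by omega⟩, Sum.inr ⟨j.val - 1, by omega⟩, Sum.inl ⟨j.val, by omega⟩}
  else {Sum.inr ⟨0, by omega⟩, Sum.inr ⟨k - 1, by omega⟩, Sum.inr ⟨k, by omega⟩}

def evenWeight (k : ℕ) (j : Fin (k + 2)) : ℕ :=
  if 2 ≤ j.val ∧ j.val ≤ k - 1 then 2 else 1

variable {k : ℕ}

theorem zval_zero_evenPot (hk : 2 ≤ k) (j : Fin (k + 2)) :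
    zval ⟨0, by omega⟩ (evenPot k j) = if j = 0 then (2 * k - 1 : ℤ) else -1 := by
  unfold evenPot
  split_ifs <;>
    simp only [zval, Multiset.insert_eq_cons, Multiset.count_cons, Multiset.count_singleton,
      Multiset.count_replicate, Sum.inl.injEq, Sum.inr.injEq, reduceCtorEq, Fin.ext_iff,
      Fin.val_zero] at * <;>
    split_ifs at * <;> omega

theorem zval_evenPot (hk : 2 ≤ k) (i : Fin (k + 1)) (hi : i.val ≠ 0) (j : Fin (k + 2)) :
    zval i (evenPot k j) =
      (if j = i.castSucc then if i.val = 1 then 2 else 1 else 0) - (if j = i.succ then 1 else 0)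
        - if i.val + 1 = k ∧ j = Fin.last (k + 1) then 1 else 0 := by
  have := j.isLt
  have := i.isLt
  unfold evenPot
  split_ifs <;>
    simp only [zval, Multiset.insert_eq_cons, Multiset.count_cons, Multiset.count_singleton,
      Multiset.count_replicate, Sum.inl.injEq, Sum.inr.injEq, reduceCtorEq, Fin.ext_iff,
      Fin.val_castSucc, Fin.val_succ, Fin.val_last] at * <;>
    split_ifs at * <;> omega

theorem sum_mul_zval_zero_evenPot {R : Type*} [CommRing R] (hk : 2 ≤ k) (r : Fin (k + 2) → R) :
    ∑ j, r j * (zval ⟨0, by omega⟩ (evenPot k j) : R) = 2 * k * r 0 - ∑ j, r j := by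
  have h (j : Fin (k + 2)) : r j * (zval ⟨0, by omega⟩ (evenPot k j) : R) =
      (if j = 0 then 2 * k * r j else 0) - r j := by
    rw [zval_zero_evenPot hk]
    split_ifs <;> push_cast <;> ring
  simp only [h, sum_sub_distrib, Fintype.sum_ite_eq']

theorem sum_mul_zval_evenPot {R : Type*} [CommRing R] (hk : 2 ≤ k) (r : Fin (k + 2) → R)
    (i : Fin (k + 1)) (hi : i.val ≠ 0) :
    ∑ j, r j * (zval i (evenPot k j) : R) =
      (if i.val = 1 then 2 else 1) * r i.castSucc - r i.succ -
        if i.val + 1 = k then r (Fin.last (k + 1)) else 0 := by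
  simp only [zval_evenPot hk i hi]
  push_cast
  simp only [mul_sub, mul_ite, mul_zero, sum_sub_distrib, ite_and, sum_ite_irrel,
    Fintype.sum_ite_eq', sum_const_zero]
  split_ifs <;> ring

theorem sum_evenWeight (hk : 2 ≤ k) : ∑ j, evenWeight k j = 2 * k := by
  obtain ⟨k, rfl⟩ : ∃ k', k = k' + 2 := ⟨k - 2, by omega⟩
  unfold evenWeight
  rw [Fin.sum_univ_eq_sum_range (fun j => if 2 ≤ j ∧ j ≤ k + 2 - 1 then 2 else 1),
    sum_range_succ, sum_range_succ, sum_range_succ', sum_range_succ',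
    sum_congr rfl fun j hj => if_pos (by simp at hj; omega)]
  simp only [sum_const, card_range, smul_eq_mul]
  split_ifs <;> omega

theorem evenWeight_isBalanced (R : Type*) [CommRing R] (hk : 2 ≤ k) :
    IsBalanced (evenPot k) fun j => (evenWeight k j : R) := by
  intro i
  by_cases hi : i.val = 0
  · obtain rfl : i = ⟨0, k.succ_pos⟩ := Fin.ext hi
    rw [sum_mul_zval_zero_evenPot hk, ← Nat.cast_sum, sum_evenWeight hk]
    simp [evenWeight]
  · rw [sum_mul_zval_evenPot hk _ i hi]
    simp only [evenWeight, Fin.val_castSucc, Fin.val_succ, Fin.val_last]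
    split_ifs <;> first | omega | norm_num

theorem IsBalanced.evenPot_row {R : Type*} [CommRing R] (hk : 2 ≤ k) {r : Fin (k + 2) → R}
    (hr : IsBalanced (evenPot k) r) (m : ℕ) (h1 : 1 ≤ m) (hmk : m ≤ k) :
    (if m = 1 then 2 else 1) * r ⟨m, by omega⟩ =
      r ⟨m + 1, by omega⟩ + if m + 1 = k then r (Fin.last (k + 1)) else 0 := by
  have := hr ⟨m, by omega⟩
  rw [sum_mul_zval_evenPot hk r _ (by simp only; omega)] at this
  simp only [Fin.castSucc_mk, Fin.succ_mk] at this
  linear_combination this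

theorem IsBalanced.evenPot_succ {K : Type*} [Field K] [CharZero K] (hk : 2 ≤ k) {r : Fin (k + 2) → K}
    (hr : IsBalanced (evenPot k) r) (j : Fin (k + 1)) :
    r j.succ = evenWeight k j.succ * r ⟨1, by omega⟩ := by
  have mid (m : ℕ) (h1 : 1 ≤ m) (hm : m ≤ k - 1) :
      (if m = 1 then 2 else 1) * r ⟨m, by omega⟩ = 2 * r ⟨1, by omega⟩ := by
    induction m, h1 using Nat.le_induction with
    | base => simp
    | succ m h1 ih =>
      rw [if_neg (by omega), one_mul, ← ih (by omega), hr.evenPot_row hk m h1 (by omega),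
        if_neg (by omega), add_zero]
  have hk_last : r ⟨k, by omega⟩ = r (Fin.last (k + 1)) := by
    have := hr.evenPot_row hk k (by omega) le_rfl
    rwa [if_neg (by omega), if_neg (by omega), one_mul, add_zero] at this
  have hlast : r (Fin.last (k + 1)) = r ⟨1, by omega⟩ := by
    have := hr.evenPot_row hk (k - 1) (by omega) (by omega)
    rw [mid (k - 1) (by omega) le_rfl, if_pos (by omega)] at this
    simp only [Nat.sub_add_cancel (by omega : 1 ≤ k)] at this
    rw [hk_last] at this
    linear_combination -this / 2
  obtain ⟨j, hj⟩ := j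
  simp only [evenWeight, Fin.succ_mk]
  rcases (by omega : j = 0 ∨ (1 ≤ j ∧ j + 1 ≤ k - 1) ∨ j + 1 = k ∨ j = k) with
    rfl | hj' | hj' | rfl
  · simp
  · rw [if_pos (by omega), Nat.cast_ofNat, ← mid (j + 1) (by omega) hj'.2, if_neg (by omega),
      one_mul]
  · rw [if_neg (by omega), Nat.cast_one, one_mul, ← hlast, ← hk_last]
    congr
  · rw [if_neg (by omega), Nat.cast_one, one_mul, ← hlast]
    rfl

theorem IsBalanced.eq_evenWeight_mul {K : Type*} [Field K] [CharZero K] (hk : 2 ≤ k)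
    {r : Fin (k + 2) → K} (hr : IsBalanced (evenPot k) r) :
    r = fun j => evenWeight k j * r 0 := by
  have h0 : r 0 = r ⟨1, by omega⟩ := by
    have hw : ∑ j : Fin (k + 1), evenWeight k j.succ = 2 * k - 1 := by
      have := sum_evenWeight hk
      rw [Fin.sum_univ_succ, show evenWeight k 0 = 1 by simp [evenWeight]] at this
      omega
    have hcast : ((2 * k - 1 : ℕ) : K) = 2 * k - 1 := by
      rw [Nat.cast_sub (by omega), Nat.cast_mul, Nat.cast_ofNat, Nat.cast_one]
    have hne : (2 * k - 1 : K) ≠ 0 := hcast ▸ Nat.cast_ne_zero.mpr (by omega)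
    have := hr ⟨0, by omega⟩
    rw [sum_mul_zval_zero_evenPot hk, Fin.sum_univ_succ] at this
    simp only [hr.evenPot_succ hk, ← sum_mul, ← Nat.cast_sum, hw, hcast] at this
    apply mul_left_cancel₀ hne
    linear_combination this
  funext j
  refine Fin.cases ?_ (fun j => ?_) j
  · simp [evenWeight]
  · rw [hr.evenPot_succ hk, h0]

theorem isBalanced_evenPot_and_sum_eq_one_iff (hk : 2 ≤ k) (r : Fin (k + 2) → ℚ) :
    (IsBalanced (evenPot k) r ∧ ∑ j, r j = 1) ↔ r = fun j => evenWeight k j / (2 * k : ℚ) := by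
  have hk0 : (2 * k : ℚ) ≠ 0 := by positivity
  have hw : ∑ j, (evenWeight k j : ℚ) = 2 * k := by exact_mod_cast sum_evenWeight hk
  constructor
  · rintro ⟨hr, hsum⟩
    have hr0 : r 0 = 1 / (2 * k) := by
      rw [hr.eq_evenWeight_mul hk, ← sum_mul, hw] at hsum
      field_simp
      linear_combination hsum
    rw [hr.eq_evenWeight_mul hk, hr0]
    simp only [mul_one_div]
  · rintro rfl
    refine ⟨fun i => ?_, ?_⟩
    · simp only [div_mul_eq_mul_div, ← sum_div, evenWeight_isBalanced ℚ hk i, zero_div]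
    · rw [← sum_div, hw, div_self hk0]

theorem mP_evenPot (hk : 2 ≤ k) : mP (univ.image (evenPot k)) = 2 * k := by
  refine IsLeast.csInf_eq ⟨?_, ?_⟩
  · obtain ⟨G, hG, hord⟩ := exists_realizes_of_isBalanced (evenWeight k)
      (evenWeight_isBalanced ℤ hk) (by rw [sum_evenWeight hk]; omega)
    exact ⟨G, hG, hord.trans (sum_evenWeight hk)⟩
  · rintro _ ⟨G, hG, rfl⟩
    obtain ⟨c, hc_sum, hc⟩ := Realizes.exists_isBalanced ℚ hG
    have hc_eq (j : Fin (k + 2)) : c j = evenWeight k j * c 0 := by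
      exact_mod_cast congrFun (hc.eq_evenWeight_mul hk) j
    have hord : G.order = 2 * k * c 0 := by
      rw [← hc_sum, sum_congr rfl fun j _ => hc_eq j, ← sum_mul, sum_evenWeight hk]
    have : 0 < G.order := Fintype.card_pos
    rw [hord] at this ⊢
    exact Nat.le_mul_of_pos_right _ (Nat.pos_of_mul_pos_left this)

theorem eq_evenPot (hk : 1 ≤ k) {t : Fin (k + 2) → Tile (k + 1)}
    (ht0 : t 0 = Multiset.replicate (2 * k - 1) (Sum.inl ⟨0, by omega⟩))
    (ht1 : t 1 = ({Sum.inr ⟨0, by omega⟩, Sum.inl ⟨1, by omega⟩,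
      Sum.inl ⟨1, by omega⟩} : Tile (k + 1)))
    (hti : ∀ (j : Fin (k + 2)) (h2 : 2 ≤ j.val) (hjk : j.val ≤ k),
      t j = ({Sum.inr ⟨0, by omega⟩,
        Sum.inr ⟨j.val - 1, by have := j.isLt; omega⟩,
        Sum.inl ⟨j.val, by have := hjk; omega⟩} : Tile (k + 1)))
    (htlast : t ⟨k + 1, by omega⟩ = ({Sum.inr ⟨0, by omega⟩,
      Sum.inr ⟨k - 1, by omega⟩, Sum.inr ⟨k, by omega⟩} : Tile (k + 1))) :
    t = evenPot k := by
  funext j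
  unfold evenPot
  split_ifs with hj h0 h1
  · obtain rfl : j = 0 := Fin.ext h0
    exact ht0
  · obtain rfl : j = 1 := Fin.ext (by simp [h1])
    exact ht1
  · exact hti j (by omega) hj
  · obtain rfl : j = ⟨k + 1, (k + 1).lt_succ_self⟩ := Fin.ext (by simp only; omega)
    exact htlast

end EvenPot

/-- For even `n = 2k ≥ 6`, the pot `P_even` (with `k+1 = n/2+1` bond-edge types
and `k+2 = n/2+2` tiles `t₁ = {a₁^{n-1}}`, `t₂ = {â₁, a₂, a₂}`,
`tᵢ = {â₁, â_{i-1}, aᵢ}` for `3 ≤ i ≤ n/2+1`, and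
`t_{n/2+2} = {â₁, â_{n/2}, â_{n/2+1}}`; here `0`-indexed) has construction
matrix with unique solution `(1/n, 1/n, 2/n, …, 2/n, 1/n, 1/n)` (the entry
`2/n` in `1`-indexed coordinates `3` through `n/2`), and consequently
`m_{P_even} = n`. -/
theorem scenario3_even_pot_matrix (n k : ℕ) (hk : 3 ≤ k) (hnk : n = 2 * k)
    (t : Fin (k + 2) → Tile (k + 1))
    (ht0 : t 0 = Multiset.replicate (n - 1) (Sum.inl ⟨0, by omega⟩))
    (ht1 : t 1 = ({Sum.inr ⟨0, by omega⟩, Sum.inl ⟨1, by omega⟩,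
      Sum.inl ⟨1, by omega⟩} : Tile (k + 1)))
    (hti : ∀ (j : Fin (k + 2)) (h2 : 2 ≤ j.val) (hjk : j.val ≤ k),
      t j = ({Sum.inr ⟨0, by omega⟩,
        Sum.inr ⟨j.val - 1, by have := j.isLt; omega⟩,
        Sum.inl ⟨j.val, by have := hjk; omega⟩} : Tile (k + 1)))
    (htlast : t ⟨k + 1, by omega⟩ = ({Sum.inr ⟨0, by omega⟩,
      Sum.inr ⟨k - 1, by omega⟩, Sum.inr ⟨k, by omega⟩} : Tile (k + 1))) :
    (∀ r : Fin (k + 2) → ℚ,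
        ((∀ i : Fin (k + 1), ∑ j, r j * (zval i (t j) : ℚ) = 0) ∧ ∑ j, r j = 1) ↔
          ∀ j : Fin (k + 2), r j =
            if 2 ≤ j.val ∧ j.val ≤ k - 1 then 2 / (n : ℚ) else 1 / (n : ℚ)) ∧
    mP (Finset.image t Finset.univ) = n := by
  subst hnk
  obtain rfl : t = evenPot k := eq_evenPot (by omega) ht0 ht1 hti htlast
  refine ⟨fun r => (isBalanced_evenPot_and_sum_eq_one_iff (by omega) r).trans ?_,
    mP_evenPot (by omega)⟩
  simp [funext_iff, evenWeight, apply_ite (fun x : ℕ => (x : ℚ)), ite_div]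
end
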